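/- Let Ω(A) be an extending datum of a bialgebra A satisfying (BE1) ((g·h)·l = Σ (g ◁ τ(h₍₁₎ ⊗ l₍₁₎))·(h₍₂₎·l₍₂₎)), (BE5), (BE7) (Σ g₍₁₎h₍₁₎ ⊗ τ(g₍₂₎ ⊗ h₍₂₎) = Σ g₍₂₎h₍₂₎ ⊗ τ(g₍₁₎ ⊗ h₍₁₎)) and with δ_H multiplicative. Then the cocycle condition (μ_A ⊗ H) ∘ (A ⊗ σ) ∘ (σ ⊗ H) = (μ_A ⊗ H) ∘ (A ⊗ σ) ∘ (ψ ⊗ H) ∘ (H ⊗ σ) holds for ψ and σ as in the unified product construction. -/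

import Mathlib

open TensorProduct

variable {R A V H : Type*} [CommRing R] [Ring A] [Bialgebra R A]
  [AddCommGroup V] [Module R V] [AddCommGroup H] [Module R H] [Coalgebra R H]

/-- (μ_A ⊗ V) ∘ (A ⊗ ψ) ∘ (ψ ⊗ A) : (V ⊗ A) ⊗ A → A ⊗ V -/
noncomputable def psiMulLHS (ψ : V ⊗[R] A →ₗ[R] A ⊗[R] V) :
    (V ⊗[R] A) ⊗[R] A →ₗ[R] A ⊗[R] V :=
  TensorProduct.map (LinearMap.mul' R A) LinearMap.id
    ∘ₗ (TensorProduct.assoc R A A V).symm.toLinearMap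
    ∘ₗ LinearMap.lTensor A ψ
    ∘ₗ (TensorProduct.assoc R A V A).toLinearMap
    ∘ₗ LinearMap.rTensor A ψ

/-- ψ ∘ (V ⊗ μ_A) : (V ⊗ A) ⊗ A → A ⊗ V -/
noncomputable def psiMulRHS (ψ : V ⊗[R] A →ₗ[R] A ⊗[R] V) :
    (V ⊗[R] A) ⊗[R] A →ₗ[R] A ⊗[R] V :=
  ψ ∘ₗ LinearMap.lTensor V (LinearMap.mul' R A)
    ∘ₗ (TensorProduct.assoc R V A A).toLinearMap

/-- ∇ = (μ_A ⊗ V) ∘ (A ⊗ ψ) ∘ (A ⊗ V ⊗ η_A) : A ⊗ V → A ⊗ V -/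
noncomputable def nabla (ψ : V ⊗[R] A →ₗ[R] A ⊗[R] V) :
    A ⊗[R] V →ₗ[R] A ⊗[R] V :=
  TensorProduct.map (LinearMap.mul' R A) LinearMap.id
    ∘ₗ (TensorProduct.assoc R A A V).symm.toLinearMap
    ∘ₗ LinearMap.lTensor A ψ
    ∘ₗ LinearMap.lTensor A ((TensorProduct.mk R V A).flip 1)

/-- The comultiplication of the tensor product coalgebra H ⊗ A. -/
noncomputable def comulHA : H ⊗[R] A →ₗ[R] (H ⊗[R] A) ⊗[R] (H ⊗[R] A) :=
  (TensorProduct.tensorTensorTensorComm R H H A A).toLinearMap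
    ∘ₗ TensorProduct.map (Coalgebra.comul : H →ₗ[R] H ⊗[R] H)
        (Coalgebra.comul : A →ₗ[R] A ⊗[R] A)

/-- The comultiplication of the tensor product coalgebra H ⊗ H. -/
noncomputable def comulHH : H ⊗[R] H →ₗ[R] (H ⊗[R] H) ⊗[R] (H ⊗[R] H) :=
  (TensorProduct.tensorTensorTensorComm R H H H H).toLinearMap
    ∘ₗ TensorProduct.map (Coalgebra.comul : H →ₗ[R] H ⊗[R] H)
        (Coalgebra.comul : H →ₗ[R] H ⊗[R] H)

/-- The counit of the tensor product coalgebra H ⊗ A. -/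
noncomputable def counitHA : H ⊗[R] A →ₗ[R] R :=
  (TensorProduct.lid R R).toLinearMap
    ∘ₗ TensorProduct.map (Coalgebra.counit : H →ₗ[R] R)
        (Coalgebra.counit : A →ₗ[R] R)

/-- The counit of the tensor product coalgebra H ⊗ H. -/
noncomputable def counitHH : H ⊗[R] H →ₗ[R] R :=
  (TensorProduct.lid R R).toLinearMap
    ∘ₗ TensorProduct.map (Coalgebra.counit : H →ₗ[R] R)
        (Coalgebra.counit : H →ₗ[R] R)

/-- An extending datum Ω(A) = (H, ◁, ▷, τ) of the bialgebra A
(Agore–Militaru). -/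
structure ExtendingDatum (R A H : Type*) [CommRing R] [Ring A] [Bialgebra R A]
    [AddCommGroup H] [Module R H] [Coalgebra R H] where
  /-- the distinguished element 1_H -/
  one : H
  /-- the multiplication μ_H -/
  mul : H ⊗[R] H →ₗ[R] H
  /-- the action ◁ : H ⊗ A → H -/
  ract : H ⊗[R] A →ₗ[R] H
  /-- the action ▷ : H ⊗ A → A -/
  lact : H ⊗[R] A →ₗ[R] A
  /-- the cocycle τ : H ⊗ H → A -/
  tau : H ⊗[R] H →ₗ[R] A
  comul_one : (Coalgebra.comul : H →ₗ[R] H ⊗[R] H) one = one ⊗ₜ one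
  one_mul' : ∀ h : H, mul (one ⊗ₜ h) = h
  mul_one' : ∀ h : H, mul (h ⊗ₜ one) = h
  ract_comul : TensorProduct.map ract ract ∘ₗ comulHA =
    (Coalgebra.comul : H →ₗ[R] H ⊗[R] H) ∘ₗ ract
  ract_counit : (Coalgebra.counit : H →ₗ[R] R) ∘ₗ ract = counitHA
  lact_comul : TensorProduct.map lact lact ∘ₗ comulHA =
    (Coalgebra.comul : A →ₗ[R] A ⊗[R] A) ∘ₗ lact
  lact_counit : (Coalgebra.counit : A →ₗ[R] R) ∘ₗ lact = counitHA
  tau_comul : TensorProduct.map tau tau ∘ₗ comulHH =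
    (Coalgebra.comul : A →ₗ[R] A ⊗[R] A) ∘ₗ tau
  tau_counit : (Coalgebra.counit : A →ₗ[R] R) ∘ₗ tau = counitHH
  lact_one : ∀ h : H, lact (h ⊗ₜ (1 : A)) =
    algebraMap R A ((Coalgebra.counit : H →ₗ[R] R) h)
  one_lact : ∀ a : A, lact (one ⊗ₜ a) = a
  one_ract : ∀ a : A, ract (one ⊗ₜ a) = ((Coalgebra.counit : A →ₗ[R] R) a) • one
  ract_one : ∀ h : H, ract (h ⊗ₜ (1 : A)) = h
  tau_one : ∀ h : H, tau (h ⊗ₜ one) =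
    algebraMap R A ((Coalgebra.counit : H →ₗ[R] R) h)
  one_tau : ∀ h : H, tau (one ⊗ₜ h) =
    algebraMap R A ((Coalgebra.counit : H →ₗ[R] R) h)

namespace ExtendingDatum

variable (E : ExtendingDatum R A H)

/-- ψ(h ⊗ a) = Σ (h₍₁₎ ▷ a₍₁₎) ⊗ (h₍₂₎ ◁ a₍₂₎). -/
noncomputable def psiE : H ⊗[R] A →ₗ[R] A ⊗[R] H :=
  TensorProduct.map E.lact E.ract ∘ₗ comulHA

/-- σ(h ⊗ g) = Σ τ(h₍₁₎ ⊗ g₍₁₎) ⊗ h₍₂₎g₍₂₎. -/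
noncomputable def sigmaE : H ⊗[R] H →ₗ[R] A ⊗[R] H :=
  TensorProduct.map E.tau E.mul ∘ₗ comulHH

/-- (BE1): (g·h)·l = Σ (g ◁ τ(h₍₁₎ ⊗ l₍₁₎))·(h₍₂₎·l₍₂₎). -/
def BE1 : Prop :=
  E.mul ∘ₗ LinearMap.rTensor H E.mul =
    E.mul ∘ₗ LinearMap.rTensor H E.ract
      ∘ₗ (TensorProduct.assoc R H A H).symm.toLinearMap
      ∘ₗ LinearMap.lTensor H E.sigmaE
      ∘ₗ (TensorProduct.assoc R H H H).toLinearMap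

/-- (BE2): g ▷ (ab) = Σ (g₍₁₎ ▷ a₍₁₎)((g₍₂₎ ◁ a₍₂₎) ▷ b). -/
def BE2 : Prop :=
  E.lact ∘ₗ LinearMap.lTensor H (LinearMap.mul' R A) =
    LinearMap.mul' R A ∘ₗ LinearMap.lTensor A E.lact
      ∘ₗ (TensorProduct.assoc R A H A).toLinearMap
      ∘ₗ LinearMap.rTensor A E.psiE
      ∘ₗ (TensorProduct.assoc R H A A).symm.toLinearMap

/-- (BE3): (g·h) ◁ a = Σ (g ◁ (h₍₁₎ ▷ a₍₁₎))·(h₍₂₎ ◁ a₍₂₎). -/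
def BE3 : Prop :=
  E.ract ∘ₗ LinearMap.rTensor A E.mul =
    E.mul ∘ₗ LinearMap.rTensor H E.ract
      ∘ₗ (TensorProduct.assoc R H A H).symm.toLinearMap
      ∘ₗ LinearMap.lTensor H E.psiE
      ∘ₗ (TensorProduct.assoc R H H A).toLinearMap

/-- (BE4): μ_A ∘ (A ⊗ τ) ∘ (ψ ⊗ H) ∘ (H ⊗ ψ) = μ_A ∘ (A ⊗ ▷) ∘ (σ ⊗ A). -/
def BE4 : Prop :=
  LinearMap.mul' R A ∘ₗ LinearMap.lTensor A E.tau
      ∘ₗ (TensorProduct.assoc R A H H).toLinearMap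
      ∘ₗ LinearMap.rTensor H E.psiE
      ∘ₗ (TensorProduct.assoc R H A H).symm.toLinearMap
      ∘ₗ LinearMap.lTensor H E.psiE
      ∘ₗ (TensorProduct.assoc R H H A).toLinearMap =
    LinearMap.mul' R A ∘ₗ LinearMap.lTensor A E.lact
      ∘ₗ (TensorProduct.assoc R A H A).toLinearMap
      ∘ₗ LinearMap.rTensor A E.sigmaE

/-- (BE5): μ_A ∘ (A ⊗ τ) ∘ (ψ ⊗ H) ∘ (H ⊗ σ) = μ_A ∘ (A ⊗ τ) ∘ (σ ⊗ H). -/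
def BE5 : Prop :=
  LinearMap.mul' R A ∘ₗ LinearMap.lTensor A E.tau
      ∘ₗ (TensorProduct.assoc R A H H).toLinearMap
      ∘ₗ LinearMap.rTensor H E.psiE
      ∘ₗ (TensorProduct.assoc R H A H).symm.toLinearMap
      ∘ₗ LinearMap.lTensor H E.sigmaE
      ∘ₗ (TensorProduct.assoc R H H H).toLinearMap =
    LinearMap.mul' R A ∘ₗ LinearMap.lTensor A E.tau
      ∘ₗ (TensorProduct.assoc R A H H).toLinearMap
      ∘ₗ LinearMap.rTensor H E.sigmaE

/-- (BE6): c_{A,H} ∘ ψ = (◁ ⊗ ▷) ∘ δ_{H⊗A}. -/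
def BE6 : Prop :=
  (TensorProduct.comm R A H).toLinearMap ∘ₗ E.psiE =
    TensorProduct.map E.ract E.lact ∘ₗ comulHA

/-- (BE7): c_{A,H} ∘ σ = (μ_H ⊗ τ) ∘ δ_{H⊗H}. -/
def BE7 : Prop :=
  (TensorProduct.comm R A H).toLinearMap ∘ₗ E.sigmaE =
    TensorProduct.map E.mul E.tau ∘ₗ comulHH

/-- δ_H is multiplicative: δ_H(gh) = Σ g₍₁₎h₍₁₎ ⊗ g₍₂₎h₍₂₎. -/
def ComulMultiplicative : Prop :=
  (Coalgebra.comul : H →ₗ[R] H ⊗[R] H) ∘ₗ E.mul =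
    TensorProduct.map E.mul E.mul ∘ₗ comulHH

/-- ε_H is multiplicative: ε_H(gh) = ε_H(g)ε_H(h). -/
def CounitMultiplicative : Prop :=
  (Coalgebra.counit : H →ₗ[R] R) ∘ₗ E.mul = counitHH

/-- (H, ◁) is a right A-module. -/
def IsRightModule : Prop :=
  (∀ h : H, E.ract (h ⊗ₜ (1 : A)) = h) ∧
    E.ract ∘ₗ LinearMap.rTensor A E.ract =
      E.ract ∘ₗ LinearMap.lTensor H (LinearMap.mul' R A)
        ∘ₗ (TensorProduct.assoc R H A A).toLinearMap

end ExtendingDatum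

/-- Twisted condition LHS: (μ_A ⊗ V) ∘ (A ⊗ ψ) ∘ (σ ⊗ A) : (V ⊗ V) ⊗ A → A ⊗ V. -/
noncomputable def twistedLHS (ψ : V ⊗[R] A →ₗ[R] A ⊗[R] V)
    (σ : V ⊗[R] V →ₗ[R] A ⊗[R] V) : (V ⊗[R] V) ⊗[R] A →ₗ[R] A ⊗[R] V :=
  TensorProduct.map (LinearMap.mul' R A) LinearMap.id
    ∘ₗ (TensorProduct.assoc R A A V).symm.toLinearMap
    ∘ₗ LinearMap.lTensor A ψ
    ∘ₗ (TensorProduct.assoc R A V A).toLinearMap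
    ∘ₗ LinearMap.rTensor A σ

/-- Twisted condition RHS: (μ_A ⊗ V) ∘ (A ⊗ σ) ∘ (ψ ⊗ V) ∘ (V ⊗ ψ) : V ⊗ (V ⊗ A) → A ⊗ V. -/
noncomputable def twistedRHS (ψ : V ⊗[R] A →ₗ[R] A ⊗[R] V)
    (σ : V ⊗[R] V →ₗ[R] A ⊗[R] V) : V ⊗[R] (V ⊗[R] A) →ₗ[R] A ⊗[R] V :=
  TensorProduct.map (LinearMap.mul' R A) LinearMap.id
    ∘ₗ (TensorProduct.assoc R A A V).symm.toLinearMap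
    ∘ₗ LinearMap.lTensor A σ
    ∘ₗ (TensorProduct.assoc R A V V).toLinearMap
    ∘ₗ LinearMap.rTensor V ψ
    ∘ₗ (TensorProduct.assoc R V A V).symm.toLinearMap
    ∘ₗ LinearMap.lTensor V ψ

/-- Cocycle condition LHS: (μ_A ⊗ V) ∘ (A ⊗ σ) ∘ (σ ⊗ V) : (V ⊗ V) ⊗ V → A ⊗ V. -/
noncomputable def cocycleLHS (σ : V ⊗[R] V →ₗ[R] A ⊗[R] V) :
    (V ⊗[R] V) ⊗[R] V →ₗ[R] A ⊗[R] V :=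
  TensorProduct.map (LinearMap.mul' R A) LinearMap.id
    ∘ₗ (TensorProduct.assoc R A A V).symm.toLinearMap
    ∘ₗ LinearMap.lTensor A σ
    ∘ₗ (TensorProduct.assoc R A V V).toLinearMap
    ∘ₗ LinearMap.rTensor V σ

/-- Cocycle condition RHS: (μ_A ⊗ V) ∘ (A ⊗ σ) ∘ (ψ ⊗ V) ∘ (V ⊗ σ) : V ⊗ (V ⊗ V) → A ⊗ V. -/
noncomputable def cocycleRHS (ψ : V ⊗[R] A →ₗ[R] A ⊗[R] V)
    (σ : V ⊗[R] V →ₗ[R] A ⊗[R] V) : V ⊗[R] (V ⊗[R] V) →ₗ[R] A ⊗[R] V :=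
  TensorProduct.map (LinearMap.mul' R A) LinearMap.id
    ∘ₗ (TensorProduct.assoc R A A V).symm.toLinearMap
    ∘ₗ LinearMap.lTensor A σ
    ∘ₗ (TensorProduct.assoc R A V V).toLinearMap
    ∘ₗ LinearMap.rTensor V ψ
    ∘ₗ (TensorProduct.assoc R V A V).symm.toLinearMap
    ∘ₗ LinearMap.lTensor V σ

/-- Auxiliary map V ⊗ (A ⊗ V) → A ⊗ V used in the weak crossed product. -/
noncomputable def wcpAux (ψ : V ⊗[R] A →ₗ[R] A ⊗[R] V)
    (σ : V ⊗[R] V →ₗ[R] A ⊗[R] V) : V ⊗[R] (A ⊗[R] V) →ₗ[R] A ⊗[R] V :=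
  TensorProduct.map (LinearMap.mul' R A) LinearMap.id
    ∘ₗ (TensorProduct.assoc R A A V).symm.toLinearMap
    ∘ₗ LinearMap.lTensor A σ
    ∘ₗ (TensorProduct.assoc R A V V).toLinearMap
    ∘ₗ LinearMap.rTensor V ψ
    ∘ₗ (TensorProduct.assoc R V A V).symm.toLinearMap

/-- The weak crossed product multiplication
μ_{A⊗V} = (μ_A ⊗ V) ∘ (μ_A ⊗ σ) ∘ (A ⊗ ψ ⊗ V) on A ⊗ V. -/
noncomputable def wcpMul (ψ : V ⊗[R] A →ₗ[R] A ⊗[R] V)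
    (σ : V ⊗[R] V →ₗ[R] A ⊗[R] V) :
    (A ⊗[R] V) ⊗[R] (A ⊗[R] V) →ₗ[R] A ⊗[R] V :=
  TensorProduct.map (LinearMap.mul' R A) LinearMap.id
    ∘ₗ (TensorProduct.assoc R A A V).symm.toLinearMap
    ∘ₗ LinearMap.lTensor A (wcpAux ψ σ)
    ∘ₗ (TensorProduct.assoc R A V (A ⊗[R] V)).toLinearMap

/-!
Write `f ⋆ g` for `c ↦ Σ f c₍₁₎ ⊗ g c₍₂₎` (`LinearMap.tensorConv`). Coassociativity of
`H ⊗ H ⊗ H`, together with multiplicativity of `δ_H`, turns the left-hand side of the cocycle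
condition into `R₅ ⋆ L₁`, where `R₅` is the right side of (BE5) and `L₁` the left side of (BE1).
On the other side, (BE7) says that `τ` and `μ_H` commute under `δ`, which makes `σ`, and hence
`g ⊗ h ⊗ l ↦ Σ (g ◁ τ(h₍₁₎ ⊗ l₍₁₎)) ⊗ h₍₂₎l₍₂₎`, preserve comultiplication; this turns the
right-hand side into `L₅ ⋆ R₁`. Now (BE5) and (BE1) identify the two sides.
-/

open Coalgebra

namespace LinearMap

section TensorConv

variable {R C D C' D' M N P M' N' : Type*} [CommSemiring R]
  [AddCommMonoid C] [Module R C] [Coalgebra R C] [AddCommMonoid D] [Module R D] [Coalgebra R D]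
  [AddCommMonoid C'] [Module R C'] [Coalgebra R C'] [AddCommMonoid D'] [Module R D']
  [Coalgebra R D'] [AddCommMonoid M] [Module R M] [AddCommMonoid N] [Module R N]
  [AddCommMonoid P] [Module R P] [AddCommMonoid M'] [Module R M'] [AddCommMonoid N'] [Module R N']

noncomputable def tensorConv (f : C →ₗ[R] M) (g : C →ₗ[R] N) : C →ₗ[R] M ⊗[R] N :=
  TensorProduct.map f g ∘ₗ comul

def PreservesComul (k : C →ₗ[R] D) : Prop :=
  TensorProduct.map k k ∘ₗ comul = comul ∘ₗ k

theorem map_comp_tensorConv (φ : M →ₗ[R] M') (ψ : N →ₗ[R] N') (f : C →ₗ[R] M)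
    (g : C →ₗ[R] N) :
    TensorProduct.map φ ψ ∘ₗ f.tensorConv g = (φ ∘ₗ f).tensorConv (ψ ∘ₗ g) := by
  rw [tensorConv, tensorConv, ← comp_assoc, ← TensorProduct.map_comp]

theorem tensorConv_comp_left (φ : M →ₗ[R] M') (f : C →ₗ[R] M) (g : C →ₗ[R] N) :
    (φ ∘ₗ f).tensorConv g = φ.rTensor N ∘ₗ f.tensorConv g := by
  rw [rTensor, map_comp_tensorConv, id_comp]

theorem tensorConv_comp_right (ψ : N →ₗ[R] N') (f : C →ₗ[R] M) (g : C →ₗ[R] N) :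
    f.tensorConv (ψ ∘ₗ g) = ψ.lTensor M ∘ₗ f.tensorConv g := by
  rw [lTensor, map_comp_tensorConv, id_comp]

theorem assoc_comp_tensorConv_tensorConv (f : C →ₗ[R] M) (g : C →ₗ[R] N) (h : C →ₗ[R] P) :
    (TensorProduct.assoc R M N P).toLinearMap ∘ₗ (f.tensorConv g).tensorConv h =
      f.tensorConv (g.tensorConv h) := by
  simp only [tensorConv, coassoc_simps]

theorem tensorConv_tensorConv (f : C →ₗ[R] M) (g : C →ₗ[R] N) (h : C →ₗ[R] P) :
    (f.tensorConv g).tensorConv h =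
      (TensorProduct.assoc R M N P).symm.toLinearMap ∘ₗ f.tensorConv (g.tensorConv h) := by
  rw [← assoc_comp_tensorConv_tensorConv, ← comp_assoc, LinearEquiv.symm_comp, id_comp]

theorem tensorConv_comp {k : D →ₗ[R] C} (hk : k.PreservesComul) (f : C →ₗ[R] M)
    (g : C →ₗ[R] N) : f.tensorConv g ∘ₗ k = (f ∘ₗ k).tensorConv (g ∘ₗ k) := by
  rw [tensorConv, tensorConv, comp_assoc, ← hk, ← comp_assoc, ← TensorProduct.map_comp]

theorem preservesComul_id : (LinearMap.id : C →ₗ[R] C).PreservesComul := by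
  simp [PreservesComul]

theorem preservesComul_assoc :
    (TensorProduct.assoc R C D C').toLinearMap.PreservesComul :=
  (Coalgebra.TensorProduct.assoc R R C D C').toCoalgHom.map_comp_comul

theorem preservesComul_assoc_symm :
    (TensorProduct.assoc R C D C').symm.toLinearMap.PreservesComul :=
  (Coalgebra.TensorProduct.assoc R R C D C').symm.toCoalgHom.map_comp_comul

theorem PreservesComul.comp {k : C →ₗ[R] D} {k' : D →ₗ[R] C'} (hk' : k'.PreservesComul)
    (hk : k.PreservesComul) : (k' ∘ₗ k).PreservesComul := by
  rw [PreservesComul, TensorProduct.map_comp, comp_assoc, hk, ← comp_assoc, hk', comp_assoc]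

theorem PreservesComul.map {f : C →ₗ[R] C'} {g : D →ₗ[R] D'} (hf : f.PreservesComul)
    (hg : g.PreservesComul) : (TensorProduct.map f g).PreservesComul := by
  unfold PreservesComul at *
  ext c d
  have hfc := LinearMap.congr_fun hf c
  have hgd := LinearMap.congr_fun hg d
  simp only [comp_apply] at hfc hgd
  simp only [TensorProduct.AlgebraTensorModule.curry_apply, TensorProduct.curry_apply,
    coe_restrictScalars, comp_apply, TensorProduct.map_tmul, TensorProduct.comul_tmul, ← hfc,
    ← hgd]
  induction comul (R := R) c using TensorProduct.induction_on with
  | zero => simp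
  | add x y hx hy => simp only [TensorProduct.add_tmul, map_add, hx, hy]
  | tmul c₁ c₂ =>
    induction comul (R := R) d using TensorProduct.induction_on with
    | zero => simp
    | add x y hx hy => simp only [TensorProduct.tmul_add, map_add, hx, hy]
    | tmul d₁ d₂ => simp

theorem comul_comp_tensorConv [Coalgebra R M] [Coalgebra R N] {f : C →ₗ[R] M}
    {g : C →ₗ[R] N} (hf : f.PreservesComul) (hg : g.PreservesComul) :
    comul ∘ₗ f.tensorConv g = (TensorProduct.tensorTensorTensorComm R M M N N).toLinearMap ∘ₗ
      (f.tensorConv f).tensorConv (g.tensorConv g) := by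
  rw [TensorProduct.comul_def, TensorProduct.AlgebraTensorModule.tensorTensorTensorComm_eq,
    TensorProduct.AlgebraTensorModule.map_eq, comp_assoc, map_comp_tensorConv, ← hf, ← hg]
  rfl

theorem PreservesComul.tensorConv [Coalgebra R M] [Coalgebra R N] {f : C →ₗ[R] M}
    {g : C →ₗ[R] N} (hf : f.PreservesComul) (hg : g.PreservesComul)
    (hfg : (TensorProduct.comm R M N).toLinearMap ∘ₗ f.tensorConv g = g.tensorConv f) :
    (f.tensorConv g).PreservesComul := by
  have hgfg : g.tensorConv (f.tensorConv g) =
      ((TensorProduct.assoc R N M N).toLinearMap ∘ₗ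
        (TensorProduct.comm R M N).toLinearMap.rTensor N ∘ₗ
          (TensorProduct.assoc R M N N).symm.toLinearMap) ∘ₗ f.tensorConv (g.tensorConv g) := by
    rw [← assoc_comp_tensorConv_tensorConv, ← hfg, tensorConv_comp_left, tensorConv_tensorConv]
    simp only [comp_assoc]
  have hshuffle : (TensorProduct.tensorTensorTensorComm R M M N N).toLinearMap ∘ₗ
      (TensorProduct.assoc R M M (N ⊗[R] N)).symm.toLinearMap =
        (TensorProduct.assoc R M N (M ⊗[R] N)).symm.toLinearMap ∘ₗ
          ((TensorProduct.assoc R N M N).toLinearMap ∘ₗ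
            (TensorProduct.comm R M N).toLinearMap.rTensor N ∘ₗ
              (TensorProduct.assoc R M N N).symm.toLinearMap).lTensor M := by
    ext; rfl
  rw [PreservesComul, comul_comp_tensorConv hf hg]
  change (f.tensorConv g).tensorConv (f.tensorConv g) = _
  rw [tensorConv_tensorConv, hgfg, tensorConv_comp_right, tensorConv_tensorConv f f]
  simp only [← comp_assoc, hshuffle]

end TensorConv

section Coaction

variable {R C Y A N : Type*} [CommSemiring R] [AddCommMonoid C] [Module R C]
  [AddCommMonoid Y] [Module R Y] [Coalgebra R Y] [Semiring A] [Algebra R A]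
  [AddCommMonoid N] [Module R N]

theorem map_mul'_comp_map_tensorConv_comp (ρ : Y →ₗ[R] C ⊗[R] Y)
    (hρ : comul.lTensor C ∘ₗ ρ =
      (TensorProduct.assoc R C Y Y).toLinearMap ∘ₗ ρ.rTensor Y ∘ₗ comul)
    (t : C →ₗ[R] A) (p : Y →ₗ[R] A) (q : Y →ₗ[R] N) :
    TensorProduct.map (mul' R A) id ∘ₗ (TensorProduct.assoc R A A N).symm.toLinearMap ∘ₗ
        TensorProduct.map t (p.tensorConv q) ∘ₗ ρ =
      (mul' R A ∘ₗ TensorProduct.map t p ∘ₗ ρ).tensorConv q := by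
  have hmul : TensorProduct.map (mul' R A) id ∘ₗ
      (TensorProduct.assoc R A A N).symm.toLinearMap ∘ₗ
        TensorProduct.map t (TensorProduct.map p q) ∘ₗ
          (TensorProduct.assoc R C Y Y).toLinearMap =
      TensorProduct.map (mul' R A ∘ₗ TensorProduct.map t p) q := by
    ext; simp
  calc _ = (TensorProduct.map (mul' R A) id ∘ₗ (TensorProduct.assoc R A A N).symm.toLinearMap ∘ₗ
          TensorProduct.map t (TensorProduct.map p q) ∘ₗ
            (TensorProduct.assoc R C Y Y).toLinearMap) ∘ₗ ρ.rTensor Y ∘ₗ comul := by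
        rw [tensorConv, ← map_comp_lTensor, comp_assoc, hρ]
        simp only [comp_assoc]
    _ = _ := by
        rw [hmul, ← comp_assoc, map_comp_rTensor, tensorConv]
        simp only [comp_assoc]

end Coaction

end LinearMap

namespace TensorProduct

variable (R C D : Type*) [CommSemiring R] [AddCommMonoid C] [Module R C] [Coalgebra R C]
  [AddCommMonoid D] [Module R D] [Coalgebra R D]

noncomputable def leftCoaction : C ⊗[R] D →ₗ[R] C ⊗[R] (C ⊗[R] D) :=
  (TensorProduct.assoc R C C D).toLinearMap ∘ₗ comul.rTensor D

noncomputable def rightCoaction : D ⊗[R] C →ₗ[R] (D ⊗[R] C) ⊗[R] C :=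
  (TensorProduct.assoc R D C C).symm.toLinearMap ∘ₗ comul.lTensor D

theorem lTensor_comul_comp_leftCoaction :
    comul.lTensor C ∘ₗ leftCoaction R C D =
      (TensorProduct.assoc R C (C ⊗[R] D) (C ⊗[R] D)).toLinearMap ∘ₗ
        (leftCoaction R C D).rTensor (C ⊗[R] D) ∘ₗ comul := by
  ext c d
  have hL : ∀ u : C ⊗[R] C, comul.lTensor C (TensorProduct.assoc R C C D (u ⊗ₜ d)) =
      ((tensorTensorTensorComm R C C D D).toLinearMap.lTensor C ∘ₗ
        (TensorProduct.assoc R C (C ⊗[R] C) (D ⊗[R] D)).toLinearMap)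
        (comul.lTensor C u ⊗ₜ comul d) := by
    intro u
    induction u using TensorProduct.induction_on with
    | zero => simp
    | add x y hx hy => simp only [add_tmul, map_add, hx, hy]
    | tmul c₁ c₂ => simp [AlgebraTensorModule.tensorTensorTensorComm_eq]
  have hR : ∀ (u : C ⊗[R] C) (w : D ⊗[R] D),
      (TensorProduct.assoc R C (C ⊗[R] D) (C ⊗[R] D)) ((leftCoaction R C D).rTensor (C ⊗[R] D)
        (tensorTensorTensorComm R C C D D (u ⊗ₜ w))) =
      ((TensorProduct.assoc R C (C ⊗[R] D) (C ⊗[R] D)).toLinearMap ∘ₗ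
        (TensorProduct.assoc R C C D).toLinearMap.rTensor (C ⊗[R] D) ∘ₗ
          (tensorTensorTensorComm R (C ⊗[R] C) C D D).toLinearMap)
        (comul.rTensor C u ⊗ₜ w) := by
    intro u w
    induction u using TensorProduct.induction_on with
    | zero => simp
    | add x y hx hy => simp only [add_tmul, map_add, hx, hy]
    | tmul c₁ c₂ =>
      induction w using TensorProduct.induction_on with
      | zero => simp
      | add x y hx hy => simp only [tmul_add, map_add, hx, hy]
      | tmul d₁ d₂ => simp [leftCoaction]
  have hshuffle : (tensorTensorTensorComm R C C D D).toLinearMap.lTensor C ∘ₗ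
        (TensorProduct.assoc R C (C ⊗[R] C) (D ⊗[R] D)).toLinearMap ∘ₗ
          (TensorProduct.assoc R C C C).toLinearMap.rTensor (D ⊗[R] D) =
      (TensorProduct.assoc R C (C ⊗[R] D) (C ⊗[R] D)).toLinearMap ∘ₗ
        (TensorProduct.assoc R C C D).toLinearMap.rTensor (C ⊗[R] D) ∘ₗ
          (tensorTensorTensorComm R (C ⊗[R] C) C D D).toLinearMap := by
    ext; rfl
  have hcd : leftCoaction R C D (c ⊗ₜ d) = TensorProduct.assoc R C C D (comul c ⊗ₜ d) := rfl
  simp only [AlgebraTensorModule.curry_apply, curry_apply, LinearMap.coe_restrictScalars,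
    LinearMap.comp_apply, LinearEquiv.coe_coe, comul_tmul,
    AlgebraTensorModule.tensorTensorTensorComm_eq, hcd]
  rw [hL, hR, ← Coalgebra.coassoc_apply, ← hshuffle]
  simp

theorem rTensor_comul_comp_rightCoaction :
    comul.rTensor C ∘ₗ rightCoaction R C D =
      (TensorProduct.assoc R (D ⊗[R] C) (D ⊗[R] C) C).symm.toLinearMap ∘ₗ
        (rightCoaction R C D).lTensor (D ⊗[R] C) ∘ₗ comul := by
  ext d c
  have hL : ∀ u : C ⊗[R] C, comul.rTensor C ((TensorProduct.assoc R D C C).symm (d ⊗ₜ u)) =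
      ((tensorTensorTensorComm R D D C C).toLinearMap.rTensor C ∘ₗ
        (TensorProduct.assoc R (D ⊗[R] D) (C ⊗[R] C) C).symm.toLinearMap)
        (comul d ⊗ₜ comul.rTensor C u) := by
    intro u
    induction u using TensorProduct.induction_on with
    | zero => simp
    | add x y hx hy => simp only [tmul_add, map_add, hx, hy]
    | tmul c₁ c₂ => simp [AlgebraTensorModule.tensorTensorTensorComm_eq]
  have hR : ∀ (w : D ⊗[R] D) (u : C ⊗[R] C),
      (TensorProduct.assoc R (D ⊗[R] C) (D ⊗[R] C) C).symm ((rightCoaction R C D).lTensor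
        (D ⊗[R] C) (tensorTensorTensorComm R D D C C (w ⊗ₜ u))) =
      ((TensorProduct.assoc R (D ⊗[R] C) (D ⊗[R] C) C).symm.toLinearMap ∘ₗ
        (TensorProduct.assoc R D C C).symm.toLinearMap.lTensor (D ⊗[R] C) ∘ₗ
          (tensorTensorTensorComm R D D C (C ⊗[R] C)).toLinearMap)
        (w ⊗ₜ comul.lTensor C u) := by
    intro w u
    induction w using TensorProduct.induction_on with
    | zero => simp
    | add x y hx hy => simp only [add_tmul, map_add, hx, hy]
    | tmul d₁ d₂ =>
      induction u using TensorProduct.induction_on with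
      | zero => simp
      | add x y hx hy => simp only [tmul_add, map_add, hx, hy]
      | tmul c₁ c₂ => simp [rightCoaction]
  have hshuffle : (tensorTensorTensorComm R D D C C).toLinearMap.rTensor C ∘ₗ
        (TensorProduct.assoc R (D ⊗[R] D) (C ⊗[R] C) C).symm.toLinearMap ∘ₗ
          (TensorProduct.assoc R C C C).symm.toLinearMap.lTensor (D ⊗[R] D) =
      (TensorProduct.assoc R (D ⊗[R] C) (D ⊗[R] C) C).symm.toLinearMap ∘ₗ
        (TensorProduct.assoc R D C C).symm.toLinearMap.lTensor (D ⊗[R] C) ∘ₗ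
          (tensorTensorTensorComm R D D C (C ⊗[R] C)).toLinearMap := by
    ext; rfl
  have hdc : rightCoaction R C D (d ⊗ₜ c) = (TensorProduct.assoc R D C C).symm (d ⊗ₜ comul c) :=
    rfl
  simp only [AlgebraTensorModule.curry_apply, curry_apply, LinearMap.coe_restrictScalars,
    LinearMap.comp_apply, LinearEquiv.coe_coe, comul_tmul,
    AlgebraTensorModule.tensorTensorTensorComm_eq, hdc]
  rw [hL, hR, ← Coalgebra.coassoc_symm_apply, ← hshuffle]
  simp

end TensorProduct

namespace ExtendingDatum

open LinearMap

variable (E : ExtendingDatum R A H) {W : Type*} [AddCommGroup W] [Module R W]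

theorem sigmaE_eq_tensorConv : E.sigmaE = E.tau.tensorConv E.mul := rfl

theorem lTensor_comp_rTensor_sigmaE (φ : H ⊗[R] H →ₗ[R] W) :
    φ.lTensor A ∘ₗ (TensorProduct.assoc R A H H).toLinearMap ∘ₗ E.sigmaE.rTensor H =
      map E.tau (φ ∘ₗ E.mul.rTensor H) ∘ₗ leftCoaction R (H ⊗[R] H) H := by
  rw [sigmaE_eq_tensorConv, tensorConv, rTensor_comp, leftCoaction]
  simp only [← comp_assoc]
  congr 1
  ext; rfl

noncomputable def ractSigma : H ⊗[R] (H ⊗[R] H) →ₗ[R] H ⊗[R] H :=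
  E.ract.rTensor H ∘ₗ (TensorProduct.assoc R H A H).symm.toLinearMap ∘ₗ E.sigmaE.lTensor H

theorem ractSigma_eq :
    E.ractSigma = map (E.ract ∘ₗ E.tau.lTensor H) E.mul ∘ₗ rightCoaction R (H ⊗[R] H) H := by
  rw [ractSigma, sigmaE_eq_tensorConv, tensorConv, lTensor_comp, rightCoaction]
  simp only [← comp_assoc]
  congr 1
  ext; rfl

theorem psiE_comp_lTensor_tau :
    E.psiE ∘ₗ E.tau.lTensor H =
      (E.lact ∘ₗ E.tau.lTensor H).tensorConv (E.ract ∘ₗ E.tau.lTensor H) :=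
  tensorConv_comp (preservesComul_id.map E.tau_comul) _ _

theorem lTensor_comp_rTensor_psiE_comp_lTensor_sigmaE (φ : H ⊗[R] H →ₗ[R] W) :
    φ.lTensor A ∘ₗ (TensorProduct.assoc R A H H).toLinearMap ∘ₗ E.psiE.rTensor H ∘ₗ
        (TensorProduct.assoc R H A H).symm.toLinearMap ∘ₗ E.sigmaE.lTensor H =
      map (E.lact ∘ₗ E.tau.lTensor H) (φ ∘ₗ E.ractSigma) ∘ₗ comul := by
  calc _ = (φ.lTensor A ∘ₗ (TensorProduct.assoc R A H H).toLinearMap ∘ₗ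
          map (E.psiE ∘ₗ E.tau.lTensor H) E.mul) ∘ₗ rightCoaction R (H ⊗[R] H) H := by
        rw [sigmaE_eq_tensorConv, tensorConv, lTensor_comp, rightCoaction]
        simp only [← comp_assoc]
        congr 1
        ext; rfl
    _ = (φ.lTensor A ∘ₗ (TensorProduct.assoc R A H H).toLinearMap ∘ₗ
          map (map (E.lact ∘ₗ E.tau.lTensor H) (E.ract ∘ₗ E.tau.lTensor H)) E.mul ∘ₗ
            (TensorProduct.assoc R (H ⊗[R] (H ⊗[R] H)) (H ⊗[R] (H ⊗[R] H))
              (H ⊗[R] H)).symm.toLinearMap) ∘ₗ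
          (rightCoaction R (H ⊗[R] H) H).lTensor (H ⊗[R] (H ⊗[R] H)) ∘ₗ comul := by
        rw [psiE_comp_lTensor_tau, tensorConv, ← map_comp_rTensor]
        simp only [comp_assoc]
        rw [rTensor_comul_comp_rightCoaction]
    _ = _ := by
        rw [ractSigma_eq, ← comp_assoc _ _ φ,
          ← map_comp_lTensor (f := E.lact ∘ₗ E.tau.lTensor H)
            (g := φ ∘ₗ map (E.ract ∘ₗ E.tau.lTensor H) E.mul)]
        simp only [← comp_assoc]
        congr 2
        ext; rfl

theorem preservesComul_sigmaE (hδ : E.ComulMultiplicative) (hBE7 : E.BE7) :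
    E.sigmaE.PreservesComul :=
  PreservesComul.tensorConv E.tau_comul hδ.symm hBE7

theorem preservesComul_ractSigma (hδ : E.ComulMultiplicative) (hBE7 : E.BE7) :
    E.ractSigma.PreservesComul :=
  (PreservesComul.map (E.ract_comul : E.ract.PreservesComul) preservesComul_id).comp
    (preservesComul_assoc_symm.comp (preservesComul_id.map (E.preservesComul_sigmaE hδ hBE7)))

theorem cocycleLHS_sigmaE_eq (hδ : E.ComulMultiplicative) :
    cocycleLHS E.sigmaE =
      (mul' R A ∘ₗ E.tau.lTensor A ∘ₗ (TensorProduct.assoc R A H H).toLinearMap ∘ₗ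
        E.sigmaE.rTensor H).tensorConv (E.mul ∘ₗ E.mul.rTensor H) := by
  have hm : (E.mul.rTensor H).PreservesComul :=
    PreservesComul.map (hδ.symm : E.mul.PreservesComul) preservesComul_id
  calc cocycleLHS E.sigmaE
      = map (mul' R A) id ∘ₗ (TensorProduct.assoc R A A H).symm.toLinearMap ∘ₗ
          E.sigmaE.lTensor A ∘ₗ (TensorProduct.assoc R A H H).toLinearMap ∘ₗ
            E.sigmaE.rTensor H := rfl
    _ = map (mul' R A) id ∘ₗ (TensorProduct.assoc R A A H).symm.toLinearMap ∘ₗ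
          map E.tau ((E.tau ∘ₗ E.mul.rTensor H).tensorConv (E.mul ∘ₗ E.mul.rTensor H)) ∘ₗ
            leftCoaction R (H ⊗[R] H) H := by
        rw [lTensor_comp_rTensor_sigmaE, sigmaE_eq_tensorConv, tensorConv_comp hm]
    _ = (mul' R A ∘ₗ map E.tau (E.tau ∘ₗ E.mul.rTensor H) ∘ₗ
            leftCoaction R (H ⊗[R] H) H).tensorConv (E.mul ∘ₗ E.mul.rTensor H) :=
        map_mul'_comp_map_tensorConv_comp _ (lTensor_comul_comp_leftCoaction R (H ⊗[R] H) H) _ _ _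
    _ = _ := by rw [lTensor_comp_rTensor_sigmaE]

theorem cocycleRHS_psiE_sigmaE_comp_assoc_eq (hδ : E.ComulMultiplicative) (hBE7 : E.BE7) :
    cocycleRHS E.psiE E.sigmaE ∘ₗ (TensorProduct.assoc R H H H).toLinearMap =
      (mul' R A ∘ₗ E.tau.lTensor A ∘ₗ (TensorProduct.assoc R A H H).toLinearMap ∘ₗ
          E.psiE.rTensor H ∘ₗ (TensorProduct.assoc R H A H).symm.toLinearMap ∘ₗ
            E.sigmaE.lTensor H ∘ₗ (TensorProduct.assoc R H H H).toLinearMap).tensorConv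
        (E.mul ∘ₗ E.ract.rTensor H ∘ₗ (TensorProduct.assoc R H A H).symm.toLinearMap ∘ₗ
          E.sigmaE.lTensor H ∘ₗ (TensorProduct.assoc R H H H).toLinearMap) := by
  have hN := E.preservesComul_ractSigma hδ hBE7
  have hRHS : cocycleRHS E.psiE E.sigmaE =
      (mul' R A ∘ₗ E.tau.lTensor A ∘ₗ (TensorProduct.assoc R A H H).toLinearMap ∘ₗ
          E.psiE.rTensor H ∘ₗ (TensorProduct.assoc R H A H).symm.toLinearMap ∘ₗ
            E.sigmaE.lTensor H).tensorConv (E.mul ∘ₗ E.ractSigma) := by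
    calc cocycleRHS E.psiE E.sigmaE
        = map (mul' R A) id ∘ₗ (TensorProduct.assoc R A A H).symm.toLinearMap ∘ₗ
            E.sigmaE.lTensor A ∘ₗ (TensorProduct.assoc R A H H).toLinearMap ∘ₗ
              E.psiE.rTensor H ∘ₗ (TensorProduct.assoc R H A H).symm.toLinearMap ∘ₗ
                E.sigmaE.lTensor H := rfl
      _ = map (mul' R A) id ∘ₗ (TensorProduct.assoc R A A H).symm.toLinearMap ∘ₗ
            map (E.lact ∘ₗ E.tau.lTensor H)
              ((E.tau ∘ₗ E.ractSigma).tensorConv (E.mul ∘ₗ E.ractSigma)) ∘ₗ comul := by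
          rw [lTensor_comp_rTensor_psiE_comp_lTensor_sigmaE, sigmaE_eq_tensorConv,
            tensorConv_comp hN]
      _ = _ := by
          rw [map_mul'_comp_map_tensorConv_comp _ Coalgebra.coassoc.symm,
            lTensor_comp_rTensor_psiE_comp_lTensor_sigmaE]
  rw [hRHS, tensorConv_comp preservesComul_assoc]
  rfl

end ExtendingDatum

/-- If an extending datum satisfies (BE1), (BE5), (BE7) and δ_H is
multiplicative, then the weak crossed product cocycle condition holds for
ψ and σ. -/
theorem BE_implies_cocycle (E : ExtendingDatum R A H)
    (hBE1 : E.BE1) (hBE5 : E.BE5) (hBE7 : E.BE7)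
    (hδ : E.ComulMultiplicative) :
    cocycleLHS E.sigmaE =
      cocycleRHS E.psiE E.sigmaE ∘ₗ (TensorProduct.assoc R H H H).toLinearMap := by
  rw [E.cocycleLHS_sigmaE_eq hδ, E.cocycleRHS_psiE_sigmaE_comp_assoc_eq hδ hBE7, hBE5, hBE1]
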